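/- Let ρ : ℝ → ℝ, let A, Q : ℝ → (real n×n matrices), B : ℝ → (real n×m matrices) and Γ : ℝ → (real m×m matrices) with each Γ(x) symmetric and invertible, and let R : ℝ → (real n×n matrices) be differentiable with each R(x) symmetric, satisfying the periodic Riccati differential equation ρ(x)·R′(x) + A(x)ᵀ·R(x) + R(x)·A(x) + Q(x) − R(x)·B(x)·Γ(x)⁻¹·B(x)ᵀ·R(x) = 0 for all x. Let s : ℝ → ℝ be differentiable with s′(t) = ρ(s(t)), and let x : ℝ → ℝⁿ be differentiable with x′(t) = (A(s(t)) − B(s(t))·Γ(s(t))⁻¹·B(s(t))ᵀ·R(s(t)))·x(t) for all t. Then the function V(t) := x(t)ᵀ·R(s(t))·x(t) is differentiable with V′(t) = −x(t)ᵀ·(Q(s(t)) + R(s(t))·B(s(t))·Γ(s(t))⁻¹·B(s(t))ᵀ·R(s(t)))·x(t) for all t. -/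

import Mathlib

/-!
With `F = A - BΓ⁻¹BᵀR` the closed-loop matrix, the product rule gives
`V' = xᵀ(FᵀR + ρR' + RF)x` along the trajectory, and since `(BΓ⁻¹BᵀR)ᵀR = RBΓ⁻¹BᵀR` for
symmetric `R` and `Γ`, the Riccati equation turns `FᵀR + ρR' + RF` into `-(Q + RBΓ⁻¹BᵀR)`.
-/

open Matrix

attribute [local instance] Matrix.normedAddCommGroup Matrix.normedSpace

theorem HasDerivAt.dotProduct_mulVec {𝕜 ι κ : Type*} [NontriviallyNormedField 𝕜]
    [Fintype ι] [Fintype κ] {u : 𝕜 → ι → 𝕜} {M : 𝕜 → Matrix ι κ 𝕜} {v : 𝕜 → κ → 𝕜}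
    {u' : ι → 𝕜} {M' : Matrix ι κ 𝕜} {v' : κ → 𝕜} {t : 𝕜}
    (hu : HasDerivAt u u' t) (hM : HasDerivAt M M' t) (hv : HasDerivAt v v' t) :
    HasDerivAt (fun τ => u τ ⬝ᵥ M τ *ᵥ v τ)
      (u' ⬝ᵥ M t *ᵥ v t + u t ⬝ᵥ M' *ᵥ v t + u t ⬝ᵥ M t *ᵥ v') t := by
  have hsum : HasDerivAt (fun τ => ∑ i, ∑ j, u τ i * (M τ i j * v τ j))
      (∑ i, ∑ j, (u' i * (M t i j * v t j) + u t i * (M' i j * v t j + M t i j * v' j))) t :=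
    HasDerivAt.fun_sum fun i _ => HasDerivAt.fun_sum fun j _ =>
      (hasDerivAt_pi.mp hu i).mul
        ((hasDerivAt_pi.mp (hasDerivAt_pi.mp hM i) j).mul (hasDerivAt_pi.mp hv j))
  convert hsum using 2 with τ
  · simp [dotProduct, mulVec, Finset.mul_sum]
  · simp only [dotProduct, mulVec, Finset.mul_sum, Finset.sum_add_distrib, mul_add]
    ring

theorem mulVec_dotProduct_add_dotProduct_mulVec {α ι : Type*} [CommSemiring α] [Fintype ι]
    (F R P : Matrix ι ι α) (x : ι → α) :
    F *ᵥ x ⬝ᵥ R *ᵥ x + x ⬝ᵥ P *ᵥ x + x ⬝ᵥ R *ᵥ F *ᵥ x = x ⬝ᵥ (Fᵀ * R + P + R * F) *ᵥ x := by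
  rw [dotProduct_comm, dotProduct_mulVec, ← mulVec_transpose, mulVec_mulVec, mulVec_mulVec,
    dotProduct_comm _ x, add_mulVec, add_mulVec, dotProduct_add, dotProduct_add]

theorem riccati_closedLoop {α ι κ : Type*} [CommRing α] [Fintype ι] [Fintype κ] [DecidableEq κ]
    {A Q R P : Matrix ι ι α} {B : Matrix ι κ α} {Γ : Matrix κ κ α}
    (hΓ : Γ.IsSymm) (hR : R.IsSymm)
    (hRic : P + Aᵀ * R + R * A + Q - R * B * Γ⁻¹ * Bᵀ * R = 0) :
    (A - B * Γ⁻¹ * Bᵀ * R)ᵀ * R + P + R * (A - B * Γ⁻¹ * Bᵀ * R)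
      = -(Q + R * B * Γ⁻¹ * Bᵀ * R) := by
  have hK : (B * Γ⁻¹ * Bᵀ * R)ᵀ = R * B * Γ⁻¹ * Bᵀ := by
    simp only [transpose_mul, transpose_transpose, transpose_nonsing_inv, hΓ.eq, hR.eq,
      Matrix.mul_assoc]
  rw [transpose_sub, hK, ← sub_eq_zero, ← hRic]
  simp only [sub_mul, mul_sub, Matrix.mul_assoc]
  abel

theorem stmt18_general {n m : ℕ}
    (ρ : ℝ → ℝ)
    (A Q : ℝ → Matrix (Fin n) (Fin n) ℝ)
    (B : ℝ → Matrix (Fin n) (Fin m) ℝ)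
    (Γ : ℝ → Matrix (Fin m) (Fin m) ℝ)
    (hΓsymm : ∀ x, (Γ x).IsSymm)
    (R : ℝ → Matrix (Fin n) (Fin n) ℝ)
    (hRdiff : Differentiable ℝ R) (hRsymm : ∀ x, (R x).IsSymm)
    (hRic : ∀ x, ρ x • deriv R x + (A x)ᵀ * R x + R x * A x + Q x
      - R x * B x * (Γ x)⁻¹ * (B x)ᵀ * R x = 0)
    (s : ℝ → ℝ) (hs : ∀ t, HasDerivAt s (ρ (s t)) t)
    (x : ℝ → Fin n → ℝ)
    (hx : ∀ t, HasDerivAt x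
      ((A (s t) - B (s t) * (Γ (s t))⁻¹ * (B (s t))ᵀ * R (s t)).mulVec (x t)) t) :
    ∀ t, HasDerivAt (fun τ => x τ ⬝ᵥ (R (s τ)).mulVec (x τ))
      (-(x t ⬝ᵥ ((Q (s t) + R (s t) * B (s t) * (Γ (s t))⁻¹ * (B (s t))ᵀ * R (s t)).mulVec
          (x t)))) t := by
  intro t
  have hRs : HasDerivAt (fun τ => R (s τ)) (ρ (s t) • deriv R (s t)) t :=
    (hRdiff (s t)).hasDerivAt.scomp t (hs t)
  have hV := (hx t).dotProduct_mulVec hRs (hx t)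
  rwa [mulVec_dotProduct_add_dotProduct_mulVec,
    riccati_closedLoop (hΓsymm (s t)) (hRsymm (s t)) (hRic (s t)), neg_mulVec,
    dotProduct_neg] at hV

/-- Lyapunov decrease along the closed-loop LQR dynamics obtained from the periodic
Riccati differential equation: if `ρ(x)·R′(x) + A(x)ᵀR(x) + R(x)A(x) + Q(x)
− R(x)B(x)Γ(x)⁻¹B(x)ᵀR(x) = 0`, `s′ = ρ(s)` and
`x′ = (A(s) − B(s)Γ(s)⁻¹B(s)ᵀR(s))·x`, then `V = xᵀR(s)x` satisfies
`V′ = −xᵀ(Q(s) + R(s)B(s)Γ(s)⁻¹B(s)ᵀR(s))x`. -/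
theorem stmt18 {n m : ℕ}
    (ρ : ℝ → ℝ)
    (A Q : ℝ → Matrix (Fin n) (Fin n) ℝ)
    (B : ℝ → Matrix (Fin n) (Fin m) ℝ)
    (Γ : ℝ → Matrix (Fin m) (Fin m) ℝ)
    (hΓsymm : ∀ x, (Γ x).IsSymm) (hΓinv : ∀ x, IsUnit (Γ x))
    (R : ℝ → Matrix (Fin n) (Fin n) ℝ)
    (hRdiff : Differentiable ℝ R) (hRsymm : ∀ x, (R x).IsSymm)
    (hRic : ∀ x, ρ x • deriv R x + (A x)ᵀ * R x + R x * A x + Q x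
      - R x * B x * (Γ x)⁻¹ * (B x)ᵀ * R x = 0)
    (s : ℝ → ℝ) (hs : ∀ t, HasDerivAt s (ρ (s t)) t)
    (x : ℝ → Fin n → ℝ)
    (hx : ∀ t, HasDerivAt x
      ((A (s t) - B (s t) * (Γ (s t))⁻¹ * (B (s t))ᵀ * R (s t)).mulVec (x t)) t) :
    ∀ t, HasDerivAt (fun τ => x τ ⬝ᵥ (R (s τ)).mulVec (x τ))
      (-(x t ⬝ᵥ ((Q (s t) + R (s t) * B (s t) * (Γ (s t))⁻¹ * (B (s t))ᵀ * R (s t)).mulVec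
          (x t)))) t :=
  stmt18_general ρ A Q B Γ hΓsymm R hRdiff hRsymm hRic s hs x hx
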